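/- Let n ∈ ℕ and let θ : ℝ × ℝ → ℝ be concave on the convex set [0,∞) × [0,∞). Then the set S = {(j, r, s) ∈ ℝⁿ × ℝ × ℝ : r ≥ 0, s ≥ 0, θ(r,s) > 0} is convex, and the function g(j, r, s) = ‖j‖² / θ(r,s) is convex on S. -/
import Mathlib


open Set

set_option maxHeartbeats 1000000

/-- Joint convexity of the discrete kinetic energy density `(j, r, s) ↦ ‖j‖² / θ(r,s)`:
if `θ` is concave on `[0,∞) × [0,∞)`, then the set
`S = {(j,r,s) : r ≥ 0, s ≥ 0, θ(r,s) > 0}` is convex and `g(j,r,s) = ‖j‖²/θ(r,s)`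
is convex on `S`. -/
theorem kinetic_energy_convex (n : ℕ) (θ : ℝ × ℝ → ℝ)
    (hconc : ConcaveOn ℝ (Ici (0 : ℝ) ×ˢ Ici (0 : ℝ)) θ) :
    Convex ℝ {p : EuclideanSpace ℝ (Fin n) × ℝ × ℝ |
        0 ≤ p.2.1 ∧ 0 ≤ p.2.2 ∧ 0 < θ (p.2.1, p.2.2)} ∧
    ConvexOn ℝ {p : EuclideanSpace ℝ (Fin n) × ℝ × ℝ |
        0 ≤ p.2.1 ∧ 0 ≤ p.2.2 ∧ 0 < θ (p.2.1, p.2.2)}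
      (fun p => ‖p.1‖ ^ 2 / θ (p.2.1, p.2.2)) := by
  have main : ∀ (p q : EuclideanSpace ℝ (Fin n) × ℝ × ℝ),
      (0 ≤ p.2.1 ∧ 0 ≤ p.2.2 ∧ 0 < θ (p.2.1, p.2.2)) →
      (0 ≤ q.2.1 ∧ 0 ≤ q.2.2 ∧ 0 < θ (q.2.1, q.2.2)) →
      ∀ a b : ℝ, 0 ≤ a → 0 ≤ b → a + b = 1 →
      (0 ≤ (a • p + b • q).2.1 ∧ 0 ≤ (a • p + b • q).2.2 ∧
        0 < θ ((a • p + b • q).2.1, (a • p + b • q).2.2)) ∧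
      ‖(a • p + b • q).1‖ ^ 2 / θ ((a • p + b • q).2.1, (a • p + b • q).2.2)
        ≤ a * (‖p.1‖ ^ 2 / θ (p.2.1, p.2.2)) + b * (‖q.1‖ ^ 2 / θ (q.2.1, q.2.2)) := by
    intro p q hp hq a b ha hb hab
    obtain ⟨hr1, hs1, hθ1⟩ := hp
    obtain ⟨hr2, hs2, hθ2⟩ := hq
    have hfst : (a • p + b • q).1 = a • p.1 + b • q.1 := rfl
    have h21 : (a • p + b • q).2.1 = a * p.2.1 + b * q.2.1 := rfl
    have h22 : (a • p + b • q).2.2 = a * p.2.2 + b * q.2.2 := rfl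
    have hmem1 : ((p.2.1, p.2.2) : ℝ × ℝ) ∈ Ici (0:ℝ) ×ˢ Ici (0:ℝ) := ⟨hr1, hs1⟩
    have hmem2 : ((q.2.1, q.2.2) : ℝ × ℝ) ∈ Ici (0:ℝ) ×ˢ Ici (0:ℝ) := ⟨hr2, hs2⟩
    have hθc := hconc.2 hmem1 hmem2 ha hb hab
    have hcombo : ((a • p + b • q).2.1, (a • p + b • q).2.2)
        = a • ((p.2.1, p.2.2) : ℝ × ℝ) + b • ((q.2.1, q.2.2) : ℝ × ℝ) := by
      simp [h21, h22, Prod.ext_iff]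
    set t1 := θ (p.2.1, p.2.2) with ht1def
    set t2 := θ (q.2.1, q.2.2) with ht2def
    have hmix : 0 < a * t1 + b * t2 := by
      rcases lt_or_eq_of_le ha with ha' | ha'
      · exact add_pos_of_pos_of_nonneg (mul_pos ha' hθ1) (mul_nonneg hb hθ2.le)
      · have hb1 : b = 1 := by linarith
        simp [← ha', hb1, hθ2]
    have hT : a * t1 + b * t2 ≤ θ ((a • p + b • q).2.1, (a • p + b • q).2.2) := by
      rw [hcombo]
      simpa [smul_eq_mul] using hθc
    have hTpos : 0 < θ ((a • p + b • q).2.1, (a • p + b • q).2.2) := lt_of_lt_of_le hmix hT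
    refine ⟨⟨by rw [h21]; exact add_nonneg (mul_nonneg ha hr1) (mul_nonneg hb hr2),
      by rw [h22]; exact add_nonneg (mul_nonneg ha hs1) (mul_nonneg hb hs2), hTpos⟩, ?_⟩
    set A := ‖p.1‖ with hAdef
    set B := ‖q.1‖ with hBdef
    have hA : 0 ≤ A := norm_nonneg _
    have hB : 0 ≤ B := norm_nonneg _
    have hnorm : ‖(a • p + b • q).1‖ ≤ a * A + b * B := by
      rw [hfst]
      calc ‖a • p.1 + b • q.1‖ ≤ ‖a • p.1‖ + ‖b • q.1‖ := norm_add_le _ _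
        _ = a * A + b * B := by rw [norm_smul, norm_smul, Real.norm_eq_abs,
            Real.norm_eq_abs, abs_of_nonneg ha, abs_of_nonneg hb]
    have hsq : ‖(a • p + b • q).1‖ ^ 2 ≤ (a * A + b * B) ^ 2 :=
      pow_le_pow_left₀ (norm_nonneg _) hnorm 2
    have key : (a * A + b * B) ^ 2 / (a * t1 + b * t2)
        ≤ a * (A ^ 2 / t1) + b * (B ^ 2 / t2) := by
      rw [div_le_iff₀ hmix]
      set u := A ^ 2 / t1 with hudef
      set v := B ^ 2 / t2 with hvdef
      have hu : u * t1 = A ^ 2 := div_mul_cancel₀ _ hθ1.ne'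
      have hv : v * t2 = B ^ 2 := div_mul_cancel₀ _ hθ2.ne'
      have huv : 2 * A * B ≤ u * t2 + v * t1 := by
        rw [← sub_nonneg]
        have h := sq_nonneg (A * t2 - B * t1)
        have hpos := mul_pos hθ1 hθ2
        have hkey : (u * t2 + v * t1 - 2 * A * B) * (t1 * t2)
            = (A * t2 - B * t1) ^ 2 := by
          rw [hudef, hvdef]; field_simp; ring
        nlinarith [hkey]
      have hab' : 0 ≤ a * b := mul_nonneg ha hb
      have h2 : a * b * (2 * A * B) ≤ a * b * (u * t2 + v * t1) :=
        mul_le_mul_of_nonneg_left huv hab'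
      have e1 : a ^ 2 * (u * t1) = a ^ 2 * A ^ 2 := by rw [hu]
      have e2 : b ^ 2 * (v * t2) = b ^ 2 * B ^ 2 := by rw [hv]
      nlinarith [e1, e2, h2]
    calc ‖(a • p + b • q).1‖ ^ 2 / θ ((a • p + b • q).2.1, (a • p + b • q).2.2)
        ≤ (a * A + b * B) ^ 2 / (a * t1 + b * t2) :=
          div_le_div₀ (sq_nonneg _) hsq hmix hT
      _ ≤ a * (A ^ 2 / t1) + b * (B ^ 2 / t2) := key
  constructor
  · intro p hp q hq a b ha hb hab
    exact (main p q hp hq a b ha hb hab).1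
  · refine ⟨fun p hp q hq a b ha hb hab => (main p q hp hq a b ha hb hab).1, ?_⟩
    intro p hp q hq a b ha hb hab
    simpa [smul_eq_mul] using (main p q hp hq a b ha hb hab).2
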